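/- Let X be a finite-dimensional real Banach space and T a nonzero operator. Then T is nu-smooth if and only if M_{W(T)} = { (x₀, x₀*), (−x₀, −x₀*) } for some fixed pair (x₀, x₀*) with x₀*(x₀) = 1 = ‖x₀‖ = ‖x₀*‖. -/

import Mathlib

/-!
On a finite-dimensional space the pairs `(x, f)` with `‖x‖ = ‖f‖ = f x = 1` form a compact set,
so `ν(T)` is attained, and a compactness argument shows that `T ⊥_ν A` holds iff `f(Tx) f(Ax)`
takes both a nonpositive and a nonnegative value on `M_{W(T)}`. If `M_{W(T)} = {±(x₀, f₀)}` this
says `f₀(A x₀) = 0`, a condition additive in `A`. Conversely, if `M_{W(T)}` contains `q ≠ ±p`,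
rank-one operators separate `p` from `q`, so some `z` makes `f(Tx) f(zx)` non-constant on
`M_{W(T)}`; subtracting from `z` the multiples of `T` that bring the minimum, resp. the maximum,
of this function to `0` gives two operators orthogonal to `T` whose sum, a positive multiple
of `T`, is not.
-/

/-- The numerical radius of a bounded linear operator on a real space. -/
noncomputable def nrad {X : Type*} [NormedAddCommGroup X] [NormedSpace ℝ X]
    (T : X →L[ℝ] X) : ℝ :=
  sSup {r : ℝ | ∃ (x : X) (f : X →L[ℝ] ℝ), ‖x‖ = 1 ∧ ‖f‖ = 1 ∧ f x = 1 ∧ r = ‖f (T x)‖}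

/-- The numerical radius attainment set of `T`. -/
noncomputable def MW {X : Type*} [NormedAddCommGroup X] [NormedSpace ℝ X]
    (T : X →L[ℝ] X) : Set (X × (X →L[ℝ] ℝ)) :=
  {p | ‖p.1‖ = 1 ∧ ‖p.2‖ = 1 ∧ p.2 p.1 = 1 ∧ |p.2 (T p.1)| = nrad T}

section

open ContinuousLinearMap

variable {X : Type*} [NormedAddCommGroup X] [NormedSpace ℝ X]

def normingPairs (X : Type*) [NormedAddCommGroup X] [NormedSpace ℝ X] :
    Set (X × (X →L[ℝ] ℝ)) :=
  {p | ‖p.1‖ = 1 ∧ ‖p.2‖ = 1 ∧ p.2 p.1 = 1}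

/-- `T ⊥_ν A`: Birkhoff–James orthogonality with respect to the numerical radius. -/
def NradOrthogonal (T A : X →L[ℝ] X) : Prop :=
  ∀ lam : ℝ, nrad T ≤ nrad (T + lam • A)

lemma nrad_eq_sSup_image (S : X →L[ℝ] X) :
    nrad S = sSup ((fun p : X × (X →L[ℝ] ℝ) => |p.2 (S p.1)|) '' normingPairs X) := by
  unfold nrad
  congr 1
  ext r
  constructor
  · rintro ⟨x, f, h1, h2, h3, rfl⟩
    exact ⟨(x, f), ⟨h1, h2, h3⟩, (Real.norm_eq_abs _).symm⟩
  · rintro ⟨⟨x, f⟩, ⟨h1, h2, h3⟩, rfl⟩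
    exact ⟨x, f, h1, h2, h3, (Real.norm_eq_abs _).symm⟩

lemma nrad_nonneg (S : X →L[ℝ] X) : 0 ≤ nrad S := by
  rw [nrad_eq_sSup_image]
  exact Real.sSup_nonneg (by rintro _ ⟨p, -, rfl⟩; exact abs_nonneg _)

lemma normingPairs_nonempty_of_nrad_pos {S : X →L[ℝ] X} (hS : 0 < nrad S) :
    (normingPairs X).Nonempty := by
  rw [Set.nonempty_iff_ne_empty]
  rintro h
  rw [nrad_eq_sSup_image, h, Set.image_empty, Real.sSup_empty] at hS
  exact hS.false

lemma continuous_snd_apply (S : X →L[ℝ] X) :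
    Continuous fun p : X × (X →L[ℝ] ℝ) => p.2 (S p.1) :=
  isBoundedBilinearMap_apply.continuous.comp
    (continuous_snd.prodMk (S.continuous.comp continuous_fst))

lemma abs_apply_le_opNorm (S : X →L[ℝ] X) {p : X × (X →L[ℝ] ℝ)} (hp : p ∈ normingPairs X) :
    |p.2 (S p.1)| ≤ ‖S‖ :=
  calc |p.2 (S p.1)| ≤ ‖p.2‖ * (‖S‖ * ‖p.1‖) :=
        (p.2.le_opNorm _).trans (mul_le_mul_of_nonneg_left (S.le_opNorm _) (norm_nonneg _))
    _ = ‖S‖ := by rw [hp.1, hp.2.1, one_mul, mul_one]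

lemma abs_apply_le_nrad (S : X →L[ℝ] X) {p : X × (X →L[ℝ] ℝ)} (hp : p ∈ normingPairs X) :
    |p.2 (S p.1)| ≤ nrad S := by
  rw [nrad_eq_sSup_image]
  refine le_csSup ⟨‖S‖, ?_⟩ ⟨p, hp, rfl⟩
  rintro _ ⟨q, hq, rfl⟩
  exact abs_apply_le_opNorm S hq

lemma MW_subset_normingPairs (T : X →L[ℝ] X) : MW T ⊆ normingPairs X :=
  fun _ hp => ⟨hp.1, hp.2.1, hp.2.2.1⟩

lemma neg_mem_MW {T : X →L[ℝ] X} {p : X × (X →L[ℝ] ℝ)} (hp : p ∈ MW T) : -p ∈ MW T := by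
  obtain ⟨h1, h2, h3, h4⟩ := hp
  exact ⟨by simpa using h1, by simpa using h2, by simpa using h3, by simpa using h4⟩

lemma apply_ne_zero_of_mem_MW {T : X →L[ℝ] X} (hT : 0 < nrad T) {p : X × (X →L[ℝ] ℝ)}
    (hp : p ∈ MW T) : p.2 (T p.1) ≠ 0 := fun h =>
  hT.ne (by simpa [h] using hp.2.2.2)

lemma apply_mul_self_of_mem_MW {T : X →L[ℝ] X} {p : X × (X →L[ℝ] ℝ)} (hp : p ∈ MW T) :
    p.2 (T p.1) * p.2 (T p.1) = nrad T ^ 2 := by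
  rw [← hp.2.2.2, sq_abs, sq]

lemma nrad_le_nrad_add_smul_of_mem_MW {T A : X →L[ℝ] X} {p : X × (X →L[ℝ] ℝ)} (hp : p ∈ MW T)
    {lam : ℝ} (h : 0 ≤ lam * (p.2 (T p.1) * p.2 (A p.1))) : nrad T ≤ nrad (T + lam • A) :=
  calc nrad T = |p.2 (T p.1)| := hp.2.2.2.symm
    _ ≤ |p.2 (T p.1) + lam * p.2 (A p.1)| :=
        sq_le_sq.mp (by nlinarith [sq_nonneg (lam * p.2 (A p.1))])
    _ = |p.2 ((T + lam • A) p.1)| := by simp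
    _ ≤ nrad (T + lam • A) := abs_apply_le_nrad _ (MW_subset_normingPairs T hp)

lemma nradOrthogonal_of_apply_eq_zero {T A : X →L[ℝ] X} {p : X × (X →L[ℝ] ℝ)} (hp : p ∈ MW T)
    (h : p.2 (A p.1) = 0) : NradOrthogonal T A :=
  fun _ => nrad_le_nrad_add_smul_of_mem_MW hp (by simp [h])

lemma abs_add_lt_of_mul_neg {a c M : ℝ} (h : a * c < 0) (ha : |a| ≤ M) (hc : |c| ≤ M) :
    |a + c| < M := by
  rw [abs_le] at ha hc
  rw [abs_lt]
  rcases mul_neg_iff.mp h with ⟨_, _⟩ | ⟨_, _⟩ <;> constructor <;> linarith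

lemma exists_eq_smul_of_forall_apply_apply_eq {x y : X} {f g : X →L[ℝ] ℝ} (hx : f x = 1)
    (h : ∀ z : X →L[ℝ] X, f (z x) = g (z y)) : ∃ c : ℝ, x = c • y ∧ g = c • f := by
  have hrank : ∀ (k : X →L[ℝ] ℝ) (v : X), k x * f v = k y * g v := fun k v => by
    simpa [smulRight_apply] using h (k.smulRight v)
  have hxy : x = g x • y := (SeparatingDual.eq_iff_forall_dual_eq (R := ℝ)).2 fun k => by
    rw [map_smul, smul_eq_mul]
    simpa [hx, mul_comm] using hrank k x
  refine ⟨g x, hxy, ?_⟩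
  have hy : y ≠ 0 := by
    intro hy0
    rw [hxy, hy0, smul_zero, map_zero] at hx
    exact zero_ne_one hx
  obtain ⟨k, hk⟩ := SeparatingDual.exists_ne_zero (R := ℝ) hy
  ext v
  have := hrank k v
  rw [hxy, map_smul, smul_eq_mul] at this
  simp only [smul_apply, smul_eq_mul]
  exact mul_left_cancel₀ hk (by linarith)

lemma eq_or_eq_neg_of_forall_apply_apply_eq {p q : X × (X →L[ℝ] ℝ)} (hp : p ∈ normingPairs X)
    (hq : q ∈ normingPairs X) (h : ∀ z : X →L[ℝ] X, p.2 (z p.1) = q.2 (z q.1)) :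
    q = p ∨ q = -p := by
  obtain ⟨c, hx, hf⟩ := exists_eq_smul_of_forall_apply_apply_eq hp.2.2 h
  have hc : |c| = 1 := by simpa [hp.1, hq.1, norm_smul] using (congrArg norm hx).symm
  rcases (abs_eq zero_le_one).1 hc with rfl | rfl
  · left
    ext <;> simp_all
  · right
    ext <;> simp_all

lemma exists_apply_mul_apply_ne {T : X →L[ℝ] X} (hT : 0 < nrad T) {p q : X × (X →L[ℝ] ℝ)}
    (hp : p ∈ MW T) (hq : q ∈ MW T) (hqp : q ≠ p) (hqp' : q ≠ -p) :
    ∃ z : X →L[ℝ] X, p.2 (T p.1) * p.2 (z p.1) ≠ q.2 (T q.1) * q.2 (z q.1) := by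
  by_contra! h
  have hs : p.2 (T p.1) = q.2 (T q.1) := by
    simpa [hp.2.2.1, hq.2.2.1] using h (ContinuousLinearMap.id ℝ X)
  have hz : ∀ z : X →L[ℝ] X, p.2 (z p.1) = q.2 (z q.1) := fun z =>
    mul_left_cancel₀ (apply_ne_zero_of_mem_MW hT hp) (by rw [h z, hs])
  rcases eq_or_eq_neg_of_forall_apply_apply_eq (MW_subset_normingPairs T hp)
    (MW_subset_normingPairs T hq) hz with h | h
  exacts [hqp h, hqp' h]

lemma apply_mul_apply_sub_smul_of_mem_MW {T : X →L[ℝ] X} (hT : 0 < nrad T)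
    {p : X × (X →L[ℝ] ℝ)} (hp : p ∈ MW T) (z : X →L[ℝ] X) (c : ℝ) :
    p.2 (T p.1) * p.2 ((z - (c / nrad T ^ 2) • T) p.1) = p.2 (T p.1) * p.2 (z p.1) - c := by
  have hT2 := apply_mul_self_of_mem_MW hp
  simp only [sub_apply, smul_apply, map_sub, map_smul, smul_eq_mul]
  field_simp
  linear_combination (-c) * hT2

section FiniteDimensional

variable [FiniteDimensional ℝ X]

lemma isCompact_normingPairs : IsCompact (normingPairs X) := by
  have : normingPairs X =
      (Metric.sphere 0 1 ×ˢ Metric.sphere 0 1) ∩ {p : X × (X →L[ℝ] ℝ) | p.2 p.1 = 1} := by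
    ext p
    simp [normingPairs, and_assoc]
  rw [this]
  exact ((isCompact_sphere 0 1).prod (isCompact_sphere 0 1)).inter_right
    (isClosed_eq (continuous_snd_apply (ContinuousLinearMap.id ℝ X)) continuous_const)

lemma isCompact_MW (T : X →L[ℝ] X) : IsCompact (MW T) := by
  have : MW T = normingPairs X ∩ {p | |p.2 (T p.1)| = nrad T} := by
    ext p
    simp [MW, normingPairs, and_assoc]
  rw [this]
  exact isCompact_normingPairs.inter_right
    (isClosed_eq (continuous_snd_apply T).abs continuous_const)

lemma exists_mem_normingPairs_abs_apply_eq_nrad (hX : (normingPairs X).Nonempty)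
    (S : X →L[ℝ] X) : ∃ p ∈ normingPairs X, |p.2 (S p.1)| = nrad S := by
  obtain ⟨m, hm⟩ := (isCompact_normingPairs.image (continuous_snd_apply S).abs).exists_isGreatest
    (hX.image _)
  rw [nrad_eq_sSup_image, hm.csSup_eq]
  exact hm.1

lemma MW_nonempty {T : X →L[ℝ] X} (hT : 0 < nrad T) : (MW T).Nonempty := by
  obtain ⟨p, hp, h⟩ :=
    exists_mem_normingPairs_abs_apply_eq_nrad (normingPairs_nonempty_of_nrad_pos hT) T
  exact ⟨p, hp.1, hp.2.1, hp.2.2, h⟩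

lemma exists_lt_nrad_of_forall_mem_MW_pos {T A : X →L[ℝ] X} (hT : 0 < nrad T)
    (hpos : ∀ p ∈ MW T, 0 < p.2 (T p.1) * p.2 (A p.1)) :
    ∃ m < nrad T, ∀ p ∈ normingPairs X, p.2 (T p.1) * p.2 (A p.1) ≤ 0 → |p.2 (T p.1)| ≤ m := by
  set C := normingPairs X ∩ {p | p.2 (T p.1) * p.2 (A p.1) ≤ 0}
  have hC : IsCompact C := isCompact_normingPairs.inter_right
    (isClosed_le ((continuous_snd_apply T).mul (continuous_snd_apply A)) continuous_const)
  rcases C.eq_empty_or_nonempty with hempty | hne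
  · refine ⟨0, hT, fun p hp hp' => ?_⟩
    exact absurd (show p ∈ C from ⟨hp, hp'⟩) (hempty ▸ Set.notMem_empty p)
  · obtain ⟨q, hq, hmax⟩ := hC.exists_isMaxOn hne (continuous_snd_apply T).abs.continuousOn
    refine ⟨|q.2 (T q.1)|, (abs_apply_le_nrad T hq.1).lt_of_ne fun h => ?_,
      fun p hp hp' => hmax ⟨hp, hp'⟩⟩
    exact (hpos q ⟨hq.1.1, hq.1.2.1, hq.1.2.2, h⟩).not_ge hq.2

lemma exists_nrad_add_smul_lt {T A : X →L[ℝ] X} (hT : 0 < nrad T)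
    (hpos : ∀ p ∈ MW T, 0 < p.2 (T p.1) * p.2 (A p.1)) :
    ∃ lam : ℝ, nrad (T + lam • A) < nrad T := by
  obtain ⟨m, hm, hbound⟩ := exists_lt_nrad_of_forall_mem_MW_pos hT hpos
  set ε := min (nrad T) (nrad T - m)
  have hε : 0 < ε := lt_min hT (sub_pos.2 hm)
  set δ := ε / (‖A‖ + 1)
  have hδ : 0 < δ := by positivity
  have hδA : δ * ‖A‖ < ε :=
    calc δ * ‖A‖ < δ * (‖A‖ + 1) := mul_lt_mul_of_pos_left (lt_add_one _) hδ
      _ = ε := div_mul_cancel₀ _ (by positivity)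
  obtain ⟨p, hp, hval⟩ := exists_mem_normingPairs_abs_apply_eq_nrad
    (normingPairs_nonempty_of_nrad_pos hT) (T + (-δ) • A)
  refine ⟨-δ, hval ▸ ?_⟩
  have hsmall : |-δ * p.2 (A p.1)| ≤ δ * ‖A‖ := by
    rw [abs_mul, abs_neg, abs_of_pos hδ]
    exact mul_le_mul_of_nonneg_left (abs_apply_le_opNorm A hp) hδ.le
  rw [add_apply, smul_apply, map_add, map_smul, smul_eq_mul]
  by_cases hsign : p.2 (T p.1) * p.2 (A p.1) ≤ 0
  · calc |p.2 (T p.1) + -δ * p.2 (A p.1)| ≤ |p.2 (T p.1)| + |-δ * p.2 (A p.1)| := abs_add_le _ _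
      _ < nrad T := by linarith [hbound p hp hsign, min_le_right (nrad T) (nrad T - m)]
  · refine abs_add_lt_of_mul_neg ?_ (abs_apply_le_nrad T hp)
      (hsmall.trans (hδA.le.trans (min_le_left _ _)))
    nlinarith

theorem nradOrthogonal_iff {T A : X →L[ℝ] X} (hT : 0 < nrad T) :
    NradOrthogonal T A ↔ (∃ p ∈ MW T, p.2 (T p.1) * p.2 (A p.1) ≤ 0) ∧
      (∃ p ∈ MW T, 0 ≤ p.2 (T p.1) * p.2 (A p.1)) := by
  constructor
  · intro hA
    constructor
    · by_contra! h
      obtain ⟨lam, hlam⟩ := exists_nrad_add_smul_lt hT h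
      exact (hA lam).not_gt hlam
    · by_contra! h
      obtain ⟨lam, hlam⟩ := exists_nrad_add_smul_lt (A := -A) hT fun p hp => by
        simpa using h p hp
      exact (hA (-lam)).not_gt (by simpa using hlam)
  · rintro ⟨⟨p, hp, hp0⟩, ⟨q, hq, hq0⟩⟩ lam
    rcases le_total 0 lam with hlam | hlam
    · exact nrad_le_nrad_add_smul_of_mem_MW hq (mul_nonneg hlam hq0)
    · exact nrad_le_nrad_add_smul_of_mem_MW hp (mul_nonneg_of_nonpos_of_nonpos hlam hp0)

lemma exists_not_nradOrthogonal_add {T z : X →L[ℝ] X} (hT : 0 < nrad T)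
    {p q : X × (X →L[ℝ] ℝ)} (hp : p ∈ MW T) (hq : q ∈ MW T)
    (hne : p.2 (T p.1) * p.2 (z p.1) ≠ q.2 (T q.1) * q.2 (z q.1)) :
    ∃ A B : X →L[ℝ] X, NradOrthogonal T A ∧ NradOrthogonal T B ∧ ¬ NradOrthogonal T (A + B) := by
  have hcont : Continuous fun r : X × (X →L[ℝ] ℝ) => r.2 (T r.1) * r.2 (z r.1) :=
    (continuous_snd_apply T).mul (continuous_snd_apply z)
  obtain ⟨r₁, hr₁, hmin⟩ := (isCompact_MW T).exists_isMinOn ⟨p, hp⟩ hcont.continuousOn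
  obtain ⟨r₂, hr₂, hmax⟩ := (isCompact_MW T).exists_isMaxOn ⟨p, hp⟩ hcont.continuousOn
  set α := r₁.2 (T r₁.1) * r₁.2 (z r₁.1)
  set β := r₂.2 (T r₂.1) * r₂.2 (z r₂.1)
  have hαβ : α < β := by
    by_contra! h
    exact hne (le_antisymm ((hmax hp).trans (h.trans (hmin hq)))
      ((hmax hq).trans (h.trans (hmin hp))))
  have hshift := fun {r} (hr : r ∈ MW T) => apply_mul_apply_sub_smul_of_mem_MW hT hr z
  refine ⟨z - (α / nrad T ^ 2) • T, -(z - (β / nrad T ^ 2) • T), ?_, ?_, ?_⟩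
  · rw [nradOrthogonal_iff hT]
    exact ⟨⟨r₁, hr₁, by rw [hshift hr₁, sub_self]⟩, ⟨r₁, hr₁, by rw [hshift hr₁, sub_self]⟩⟩
  · rw [nradOrthogonal_iff hT]
    refine ⟨⟨r₂, hr₂, ?_⟩, ⟨r₂, hr₂, ?_⟩⟩ <;>
      rw [neg_apply, map_neg, mul_neg, hshift hr₂, sub_self, neg_zero]
  · rw [nradOrthogonal_iff hT]
    rintro ⟨⟨r, hr, hr0⟩, -⟩
    simp only [add_apply, neg_apply, map_add, map_neg, mul_add, mul_neg, hshift hr] at hr0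
    linarith

lemma apply_eq_zero_of_MW_eq_pair {T A : X →L[ℝ] X} (hT : 0 < nrad T) {p : X × (X →L[ℝ] ℝ)}
    (hMW : MW T = {p, -p}) (hA : NradOrthogonal T A) : p.2 (A p.1) = 0 := by
  have hconst : ∀ q ∈ MW T, q.2 (T q.1) * q.2 (A q.1) = p.2 (T p.1) * p.2 (A p.1) := by
    intro q hq
    rw [hMW] at hq
    rcases hq with rfl | rfl <;> simp
  obtain ⟨⟨q, hq, hq0⟩, ⟨r, hr, hr0⟩⟩ := (nradOrthogonal_iff hT).1 hA
  have hp : p ∈ MW T := hMW ▸ Set.mem_insert _ _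
  have h0 : p.2 (T p.1) * p.2 (A p.1) = 0 :=
    le_antisymm (hconst q hq ▸ hq0) (hconst r hr ▸ hr0)
  exact (mul_eq_zero.1 h0).resolve_left (apply_ne_zero_of_mem_MW hT hp)

lemma nradOrthogonal_add_of_MW_eq_pair {T A B : X →L[ℝ] X} (hT : 0 < nrad T)
    {p : X × (X →L[ℝ] ℝ)} (hMW : MW T = {p, -p}) (hA : NradOrthogonal T A)
    (hB : NradOrthogonal T B) : NradOrthogonal T (A + B) :=
  nradOrthogonal_of_apply_eq_zero (hMW ▸ Set.mem_insert _ _) (by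
    simp [apply_eq_zero_of_MW_eq_pair hT hMW hA, apply_eq_zero_of_MW_eq_pair hT hMW hB])

end FiniteDimensional

end

/-- on a finite-dimensional real Banach space (on which the numerical radius
is a norm), a nonzero `T` is nu-smooth iff `M_{W(T)} = {(x₀, x₀*), (−x₀, −x₀*)}` for some
fixed pair `(x₀, x₀*)` with `x₀*(x₀) = 1 = ‖x₀‖ = ‖x₀*‖`. -/
theorem nu_smooth_iff_real (X : Type*) [NormedAddCommGroup X] [NormedSpace ℝ X]
    [FiniteDimensional ℝ X]
    (hnorm : ∀ S : X →L[ℝ] X, nrad S = 0 → S = 0)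
    (T : X →L[ℝ] X) (hT : T ≠ 0) :
    (∀ A B : X →L[ℝ] X, (∀ lam : ℝ, nrad T ≤ nrad (T + lam • A)) →
      (∀ lam : ℝ, nrad T ≤ nrad (T + lam • B)) →
      (∀ lam : ℝ, nrad T ≤ nrad (T + lam • (A + B)))) ↔
    (∃ (x₀ : X) (f₀ : X →L[ℝ] ℝ), ‖x₀‖ = 1 ∧ ‖f₀‖ = 1 ∧ f₀ x₀ = 1 ∧
      MW T = {(x₀, f₀), (-x₀, -f₀)}) := by
  have hpos : 0 < nrad T := (nrad_nonneg T).lt_of_ne' fun h => hT (hnorm T h)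
  change (∀ A B, NradOrthogonal T A → NradOrthogonal T B → NradOrthogonal T (A + B)) ↔ _
  simp only [← Prod.neg_mk]
  constructor
  · intro hadd
    obtain ⟨p, hp⟩ := MW_nonempty hpos
    refine ⟨p.1, p.2, hp.1, hp.2.1, hp.2.2.1, ?_⟩
    refine Set.Subset.antisymm (fun q hq => ?_)
      (Set.insert_subset hp (Set.singleton_subset_iff.2 (neg_mem_MW hp)))
    by_contra hq'
    simp only [Set.mem_insert_iff, Set.mem_singleton_iff, not_or] at hq'
    obtain ⟨z, hz⟩ := exists_apply_mul_apply_ne hpos hp hq hq'.1 hq'.2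
    obtain ⟨A, B, hA, hB, hAB⟩ := exists_not_nradOrthogonal_add hpos hp hq hz
    exact hAB (hadd A B hA hB)
  · rintro ⟨x₀, f₀, -, -, -, hMW⟩ A B hA hB
    exact nradOrthogonal_add_of_MW_eq_pair hpos hMW hA hB
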